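/- Let c ∈ ℝ^{N×M} be a cost matrix. Consider the optimal transport value W(π) = min { ∑_{i=1}^N ∑_{m=1}^M a_{im} c_{im} : A ∈ ℝ_{≥0}^{N×M}, ∑_{m=1}^M a_{im} = 1/N for all i, ∑_{i=1}^N a_{im} = π_m for all m } for π in the probability simplex Δ_{M−1}. Then the minimum of W(π) over π ∈ Δ_{M−1} equals (1/N)·∑_{i=1}^N min_{1≤m≤M} c_{im}, and it is attained by the matrix whose i-th row is the scaled one-hot vector (1/N)·𝟙_{m_i}, where m_i is any index minimizing c_{im} over m. (This justifies that, when the mixing proportion π is jointly optimized, minimizing the class-aware OT distance matches each sample to its lowest-cost source class-conditional distribution, with the rows of the optimal transportation matrix being scaled one-hot vectors.) -/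

import Mathlib

/-!
Each row of a transport plan has mass `1/N`, so its cost is at least `1/N` times the row
minimum of `c`; summing over rows bounds every `W(π)` from below. Sending each row's whole
mass to a minimizing column attains the bound, and since `π` is free its column sums
automatically form a point of the simplex.
-/

open Finset

theorem ciInf_eq_of_forall_le {κ : Type*} {c : κ → ℝ} {k : κ} (hk : ∀ m, c k ≤ c m) :
    ⨅ m, c m = c k :=
  have : Nonempty κ := ⟨k⟩
  (IsLeast.isGLB ⟨Set.mem_range_self k, Set.forall_mem_range.2 hk⟩).ciInf_eq

theorem sum_mul_ciInf_le_sum_mul {κ : Type*} [Fintype κ] [Nonempty κ] (w c : κ → ℝ)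
    (hw : ∀ m, 0 ≤ w m) :
    (∑ m, w m) * ⨅ m, c m ≤ ∑ m, w m * c m := by
  rw [sum_mul]
  gcongr with m
  · exact hw m
  · exact ciInf_le (Set.finite_range c).bddBelow m

theorem sum_sum_mul_ciInf_le_sum_sum_mul {ι κ : Type*} [Fintype ι] [Fintype κ] [Nonempty κ]
    (t : ℝ) (a c : ι → κ → ℝ) (ha : ∀ i m, 0 ≤ a i m) (hrow : ∀ i, ∑ m, a i m = t) :
    t * ∑ i, ⨅ m, c i m ≤ ∑ i, ∑ m, a i m * c i m := by
  rw [mul_sum]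
  gcongr with i
  simpa only [hrow i] using sum_mul_ciInf_le_sum_mul (a i) (c i) (ha i)

theorem sum_ite_eq_mul {κ : Type*} [Fintype κ] [DecidableEq κ] (t : ℝ) (k : κ) (c : κ → ℝ) :
    ∑ m, (if m = k then t else 0) * c m = t * c k := by
  simp

theorem sum_sum_oneHot_mul_eq_mul_sum_ciInf {ι κ : Type*} [Fintype ι] [Fintype κ]
    [DecidableEq κ] (t : ℝ) (c : ι → κ → ℝ) (f : ι → κ) (hf : ∀ i m, c i (f i) ≤ c i m) :
    ∑ i, ∑ m, (if m = f i then t else 0) * c i m = t * ∑ i, ⨅ m, c i m := by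
  simp only [sum_ite_eq_mul, ciInf_eq_of_forall_le (hf _), mul_sum]

theorem colSum_oneHot_mem_stdSimplex {ι κ : Type*} [Fintype ι] [Nonempty ι] [Fintype κ]
    [DecidableEq κ] (f : ι → κ) :
    (fun m => ∑ i, (if m = f i then 1 / (Fintype.card ι : ℝ) else 0)) ∈ stdSimplex ℝ κ := by
  refine ⟨fun m => sum_nonneg fun i _ => by positivity, ?_⟩
  rw [sum_comm]
  simp [Fintype.card_ne_zero]

/-- When the mixing proportion `π` is jointly optimized over the simplex, the
class-aware OT value `min_π W(π)` equals `(1/N) ∑ i min_m c i m`, and it is attained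
by the matrix whose `i`-th row is the scaled one-hot vector `(1/N) 𝟙_{f i}` for any
selection `f` of per-row minimizers of the cost. -/
theorem ot_min_over_mixing_eq_rowmin
    (N M : ℕ) (hN : 1 ≤ N) (hM : 1 ≤ M) (c : Fin N → Fin M → ℝ) :
    IsLeast { s : ℝ | ∃ π : Fin M → ℝ, π ∈ stdSimplex ℝ (Fin M) ∧
        ∃ a : Fin N → Fin M → ℝ,
          (∀ i m, 0 ≤ a i m) ∧ (∀ i, ∑ m, a i m = 1 / (N : ℝ)) ∧
          (∀ m, ∑ i, a i m = π m) ∧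
          s = ∑ i, ∑ m, a i m * c i m }
      ((1 / (N : ℝ)) * ∑ i, ⨅ m, c i m) ∧
    ∀ f : Fin N → Fin M, (∀ i m, c i (f i) ≤ c i m) →
      ((fun m => ∑ i, (if m = f i then (1 / (N : ℝ)) else 0)) ∈ stdSimplex ℝ (Fin M) ∧
        ∑ i, ∑ m, (if m = f i then (1 / (N : ℝ)) else 0) * c i m
          = (1 / (N : ℝ)) * ∑ i, ⨅ m, c i m) := by
  have : Nonempty (Fin N) := Fin.pos_iff_nonempty.1 hN
  have : Nonempty (Fin M) := Fin.pos_iff_nonempty.1 hM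
  have hsimplex : ∀ f : Fin N → Fin M,
      (fun m => ∑ i, (if m = f i then (1 / (N : ℝ)) else 0)) ∈ stdSimplex ℝ (Fin M) := by
    simpa using colSum_oneHot_mem_stdSimplex (ι := Fin N) (κ := Fin M)
  choose f hf using fun i => Finite.exists_min (c i)
  refine ⟨⟨⟨_, hsimplex f, _, fun i m => by positivity, fun i => by simp, fun m => rfl,
    (sum_sum_oneHot_mul_eq_mul_sum_ciInf _ c f hf).symm⟩, ?_⟩,
    fun f hf => ⟨hsimplex f, sum_sum_oneHot_mul_eq_mul_sum_ciInf _ c f hf⟩⟩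
  rintro s ⟨π, -, a, ha, hrow, -, rfl⟩
  exact sum_sum_mul_ciInf_le_sum_sum_mul _ a c ha hrow
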